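/- arXiv:1906.04083 — 4 statements merged into one kernel-verified Lean document; each statement's English description precedes it below -/
import Mathlib

section
/- Let H be a Hopf algebra, A a right H-comodule algebra, B = A^{co H}, and ℓ : H → A ⊗ A a strong connection form (normalised, splitting the counit via multiplication, right colinear and left colinear). Then for every h ∈ H, the element (id ⊗ μ_A ⊗ id)((ℓ ⊗ ℓ)(Δ_H(h))) lies in A ⊗ B ⊗ A, i.e., the middle leg is coinvariant. -/
/-!
Write `ℓ h = h⟨1⟩ ⊗ h⟨2⟩`. Right colinearity says `h⟨1⟩ ⊗ ρ(h⟨2⟩) = h₁⟨1⟩ ⊗ h₁⟨2⟩ ⊗ h₂`, and left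
colinearity, after applying `S` to undo the `S⁻¹` in `λ_A`, says
`ρ(h⟨1⟩) ⊗ h⟨2⟩ = h₂⟨1⟩ ⊗ S(h₁) ⊗ h₂⟨2⟩`. Since `ρ` is multiplicative, applying it to the middle leg
of `h₁⟨1⟩ ⊗ h₁⟨2⟩ h₂⟨1⟩ ⊗ h₂⟨2⟩` gives `h₁⟨1⟩ ⊗ (h₁⟨2⟩ h₄⟨1⟩ ⊗ h₂ S(h₃)) ⊗ h₄⟨2⟩`, and the antipode
axiom collapses `h₂ ⊗ S(h₃)` to `1`, leaving the middle leg tensored with `1`. Over a field every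
module is flat, so `A ⊗ B ⊗ A` is exactly the kernel of `id ⊗ (ρ - (· ⊗ 1)) ⊗ id`.
-/

open TensorProduct

namespace TensorProduct

variable (R M C N : Type*) [CommSemiring R] [AddCommMonoid M] [Module R M] [Semiring C]
  [Algebra R C] [AddCommMonoid N] [Module R N]

noncomputable def midMul : (M ⊗[R] C) ⊗[R] (C ⊗[R] N) →ₗ[R] M ⊗[R] (C ⊗[R] N) :=
  ((LinearMap.mul' R C).rTensor N).lTensor M ∘ₗ
    (TensorProduct.assoc R C C N).symm.toLinearMap.lTensor M ∘ₗ
    (TensorProduct.assoc R M C (C ⊗[R] N)).toLinearMap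

variable {R M C N}

@[simp]
theorem midMul_tmul (m : M) (c c' : C) (n : N) :
    midMul R M C N ((m ⊗ₜ c) ⊗ₜ (c' ⊗ₜ n)) = m ⊗ₜ ((c * c') ⊗ₜ n) := by
  simp [midMul]

theorem lTensor_rTensor_comp_midMul {D : Type*} [Semiring D] [Algebra R D] (φ : C →ₐ[R] D) :
    (φ.toLinearMap.rTensor N).lTensor M ∘ₗ midMul R M C N =
      midMul R M D N ∘ₗ map (φ.toLinearMap.lTensor M) (φ.toLinearMap.rTensor N) := by
  ext m c c' n
  simp

variable {D : Type*} [Semiring D] [Algebra R D]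

theorem assoc_symm_leftComm_one_tmul (y : C ⊗[R] N) :
    (TensorProduct.assoc R C D N).symm (TensorProduct.leftComm R D C N (1 ⊗ₜ y)) =
      (Algebra.TensorProduct.includeLeft : C →ₐ[R] C ⊗[R] D).toLinearMap.rTensor N y := by
  induction y using TensorProduct.induction_on with
  | zero => simp
  | tmul c n => simp
  | add y y' hy hy' => simp only [tmul_add, map_add, hy, hy']

theorem midMul_assoc_tmul_assoc_symm_leftComm (x : M ⊗[R] C) (d d' : D) (y : C ⊗[R] N) :
    midMul R M (C ⊗[R] D) N (TensorProduct.assoc R M C D (x ⊗ₜ d) ⊗ₜ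
        (TensorProduct.assoc R C D N).symm (TensorProduct.leftComm R D C N (d' ⊗ₜ y))) =
      midMul R M (C ⊗[R] D) N
        ((Algebra.TensorProduct.includeLeft : C →ₐ[R] C ⊗[R] D).toLinearMap.lTensor M x ⊗ₜ
          (TensorProduct.assoc R C D N).symm (TensorProduct.leftComm R D C N ((d * d') ⊗ₜ y))) := by
  induction x using TensorProduct.induction_on with
  | zero => simp
  | add x x' hx hx' => simp only [add_tmul, map_add, hx, hx']
  | tmul m c =>
    induction y using TensorProduct.induction_on with
    | zero => simp
    | add y y' hy hy' => simp only [tmul_add, map_add, hy, hy']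
    | tmul c' n => simp

end TensorProduct

theorem LinearMap.ker_lTensor_rTensor_eq_range_subtype_ker {R M N P Q : Type*} [CommRing R]
    [AddCommGroup M] [Module R M] [AddCommGroup N] [Module R N] [AddCommGroup P] [Module R P]
    [AddCommGroup Q] [Module R Q] [Module.Flat R M] [Module.Flat R N] (g : P →ₗ[R] Q) :
    ker ((g.rTensor N).lTensor M) = range (((ker g).subtype.rTensor N).lTensor M) :=
  (Module.Flat.lTensor_exact M
    (Module.Flat.rTensor_exact N (LinearMap.exact_subtype_ker_map g))).linearMap_ker_eq

section HopfAlgebra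

variable {R H : Type*} [CommSemiring R] [Semiring H] [HopfAlgebra R H]

theorem midMul_comp_map_comul_rTensor_antipode_comp_comul :
    midMul R H H H ∘ₗ map Coalgebra.comul ((HopfAlgebra.antipode R).rTensor H ∘ₗ Coalgebra.comul) ∘ₗ
      Coalgebra.comul =
      (TensorProduct.mk R H H 1).lTensor H ∘ₗ Coalgebra.comul (R := R) (A := H) := by
  simp only [midMul, coassoc_simps]
  have hS : LinearMap.mul' R H ∘ₗ map LinearMap.id (HopfAlgebra.antipode R) ∘ₗ Coalgebra.comul =
      Algebra.linearMap R H ∘ₗ Coalgebra.counit := HopfAlgebra.mul_antipode_lTensor_comul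
  have hε : map (Algebra.linearMap R H ∘ₗ Coalgebra.counit) LinearMap.id ∘ₗ Coalgebra.comul =
      TensorProduct.mk R H H 1 := by
    ext x
    change (Algebra.linearMap R H ∘ₗ Coalgebra.counit).rTensor H (Coalgebra.comul x) = 1 ⊗ₜ x
    rw [LinearMap.rTensor_comp_apply, Coalgebra.rTensor_counit_comul]
    simp
  rw [hS, hε]

end HopfAlgebra

section StrongConnection

variable {R H A : Type*} [CommSemiring R] [Semiring H] [HopfAlgebra R H] [Semiring A] [Algebra R A]
  (ρ : A →ₐ[R] A ⊗[R] H) (ℓ : H →ₗ[R] A ⊗[R] A)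

local notation "Δ" => Coalgebra.comul (R := R) (A := H)
local notation "𝒮" => HopfAlgebra.antipode R (A := H)
local notation "ι" =>
  AlgHom.toLinearMap (Algebra.TensorProduct.includeLeft (S := R) (A := A) (B := H))
local notation "τ" => LinearEquiv.toLinearMap (LinearEquiv.symm (TensorProduct.assoc R A H A)) ∘ₗ
  LinearEquiv.toLinearMap (TensorProduct.leftComm R H A A)

theorem rTensor_comp_eq_of_leftColinear (Sinv : H →ₗ[R] H) (hS : ∀ h : H, 𝒮 (Sinv h) = h)
    (lam : A →ₗ[R] H ⊗[R] A)
    (hlam : ∀ a : A, lam a = map Sinv LinearMap.id (TensorProduct.comm R A H (ρ a)))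
    (hleft : ∀ h : H, TensorProduct.assoc R H A A (map lam LinearMap.id (ℓ h)) =
      map LinearMap.id ℓ (Δ h)) :
    ρ.toLinearMap.rTensor A ∘ₗ ℓ = (τ) ∘ₗ map 𝒮 ℓ ∘ₗ Δ := by
  have hρ : (τ) ∘ₗ LinearMap.rTensor (A ⊗[R] A) 𝒮 ∘ₗ (TensorProduct.assoc R H A A).toLinearMap ∘ₗ
      map lam LinearMap.id = ρ.toLinearMap.rTensor A := by
    refine TensorProduct.ext' fun a d => ?_
    simp only [LinearMap.comp_apply, LinearMap.rTensor_tmul, map_tmul, LinearMap.id_coe, id_eq,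
      AlgHom.toLinearMap_apply, hlam]
    induction ρ a using TensorProduct.induction_on with
    | zero => simp
    | tmul c k => simp [hS]
    | add x y hx hy => simp only [map_add, add_tmul, hx, hy]
  ext h
  rw [← hρ]
  simp only [LinearMap.comp_apply, LinearEquiv.coe_coe]
  rw [hleft h, ← LinearMap.comp_apply (LinearMap.rTensor _ 𝒮), LinearMap.rTensor_comp_map]
  rfl

theorem lTensor_rTensor_comp_midMul_comp_map_comp_comul
    (hright : ρ.toLinearMap.lTensor A ∘ₗ ℓ =
      (TensorProduct.assoc R A A H).toLinearMap ∘ₗ ℓ.rTensor H ∘ₗ Δ)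
    (hleft : ρ.toLinearMap.rTensor A ∘ₗ ℓ = (τ) ∘ₗ map 𝒮 ℓ ∘ₗ Δ) :
    (ρ.toLinearMap.rTensor A).lTensor A ∘ₗ midMul R A A A ∘ₗ map ℓ ℓ ∘ₗ Δ =
      (LinearMap.rTensor A ι).lTensor A ∘ₗ midMul R A A A ∘ₗ map ℓ ℓ ∘ₗ Δ := by
  have hinsert : midMul R A (A ⊗[R] H) A ∘ₗ map (TensorProduct.assoc R A A H).toLinearMap (τ) ∘ₗ
      map (ℓ.rTensor H) (map 𝒮 ℓ) =
      (midMul R A (A ⊗[R] H) A ∘ₗ map (LinearMap.lTensor A ι) (τ) ∘ₗ map ℓ (ℓ.lTensor H)) ∘ₗ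
        midMul R H H H ∘ₗ map LinearMap.id (LinearMap.rTensor H 𝒮) := by
    refine TensorProduct.ext_fourfold' fun a b c d => ?_
    simpa using midMul_assoc_tmul_assoc_symm_leftComm (ℓ a) b (𝒮 c) (ℓ d)
  have hunit :
      (midMul R A (A ⊗[R] H) A ∘ₗ map (LinearMap.lTensor A ι) (τ) ∘ₗ map ℓ (ℓ.lTensor H)) ∘ₗ
        (TensorProduct.mk R H H 1).lTensor H =
      (LinearMap.rTensor A ι).lTensor A ∘ₗ midMul R A A A ∘ₗ map ℓ ℓ := by
    refine TensorProduct.ext' fun a b => ?_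
    simp only [LinearMap.comp_apply, LinearMap.lTensor_tmul, TensorProduct.mk_apply, map_tmul,
      LinearEquiv.coe_coe, assoc_symm_leftComm_one_tmul]
    exact (LinearMap.congr_fun (lTensor_rTensor_comp_midMul _) (ℓ a ⊗ₜ ℓ b)).symm
  calc (ρ.toLinearMap.rTensor A).lTensor A ∘ₗ midMul R A A A ∘ₗ map ℓ ℓ ∘ₗ Δ
      = (midMul R A (A ⊗[R] H) A ∘ₗ map (TensorProduct.assoc R A A H).toLinearMap (τ) ∘ₗ
          map (ℓ.rTensor H) (map 𝒮 ℓ)) ∘ₗ map Δ Δ ∘ₗ Δ := by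
        rw [← LinearMap.comp_assoc, lTensor_rTensor_comp_midMul, LinearMap.comp_assoc,
          ← LinearMap.comp_assoc _ (map ℓ ℓ), ← map_comp, hright, hleft, map_comp, map_comp]
        simp only [LinearMap.comp_assoc]
    _ = (midMul R A (A ⊗[R] H) A ∘ₗ map (LinearMap.lTensor A ι) (τ) ∘ₗ map ℓ (ℓ.lTensor H)) ∘ₗ
          midMul R H H H ∘ₗ map Δ (LinearMap.rTensor H 𝒮 ∘ₗ Δ) ∘ₗ Δ := by
        have hmap : map Δ (LinearMap.rTensor H 𝒮 ∘ₗ Δ) =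
            map LinearMap.id (LinearMap.rTensor H 𝒮) ∘ₗ map Δ Δ := by
          rw [← map_comp, LinearMap.id_comp]
        rw [hinsert, hmap]
        simp only [LinearMap.comp_assoc]
    _ = (LinearMap.rTensor A ι).lTensor A ∘ₗ midMul R A A A ∘ₗ map ℓ ℓ ∘ₗ Δ := by
        rw [midMul_comp_map_comul_rTensor_antipode_comp_comul, ← LinearMap.comp_assoc, hunit]
        simp only [LinearMap.comp_assoc]

end StrongConnection

theorem stmt_3_general (H A : Type*) [Ring H] [HopfAlgebra ℂ H] [Ring A] [Algebra ℂ A]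
    (ρ : A →ₐ[ℂ] A ⊗[ℂ] H)
    -- inverse of the antipode and the induced left coaction λ_A
    (Sinv : H →ₗ[ℂ] H)
    (hS2 : ∀ h : H, (HopfAlgebra.antipode (R := ℂ) : H →ₗ[ℂ] H) (Sinv h) = h)
    (lam : A →ₗ[ℂ] H ⊗[ℂ] A)
    (hlam : ∀ a : A,
      lam a = TensorProduct.map Sinv LinearMap.id (TensorProduct.comm ℂ A H (ρ a)))
    -- the strong connection form ℓ
    (ℓ : H →ₗ[ℂ] A ⊗[ℂ] A)
    (hright : ∀ h : H,
      TensorProduct.map LinearMap.id ρ.toLinearMap (ℓ h) =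
        TensorProduct.assoc ℂ A A H (TensorProduct.map ℓ LinearMap.id (Coalgebra.comul h)))
    (hleft : ∀ h : H,
      TensorProduct.assoc ℂ H A A (TensorProduct.map lam LinearMap.id (ℓ h)) =
        TensorProduct.map LinearMap.id ℓ (Coalgebra.comul h))
    -- the map (id ⊗ μ_A ⊗ id) : (A ⊗ A) ⊗ (A ⊗ A) → A ⊗ (A ⊗ A)
    (f : (A ⊗[ℂ] A) ⊗[ℂ] (A ⊗[ℂ] A) →ₗ[ℂ] A ⊗[ℂ] (A ⊗[ℂ] A))
    (hf : ∀ a₁ a₂ a₃ a₄ : A,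
      f ((a₁ ⊗ₜ[ℂ] a₂) ⊗ₜ[ℂ] (a₃ ⊗ₜ[ℂ] a₄)) = a₁ ⊗ₜ[ℂ] ((a₂ * a₃) ⊗ₜ[ℂ] a₄)) :
    ∀ h : H,
      f (TensorProduct.map ℓ ℓ (Coalgebra.comul h)) ∈
        LinearMap.range (TensorProduct.map (LinearMap.id : A →ₗ[ℂ] A)
          (TensorProduct.map
            (LinearMap.ker (ρ.toLinearMap - (TensorProduct.mk ℂ A H).flip 1)).subtype
            (LinearMap.id : A →ₗ[ℂ] A))) := by
  intro h
  have hf_eq : f = midMul ℂ A A A := TensorProduct.ext_fourfold' fun a b c d => by simp [hf]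
  have hincl : (TensorProduct.mk ℂ A H).flip 1 =
      (Algebra.TensorProduct.includeLeft : A →ₐ[ℂ] A ⊗[ℂ] H).toLinearMap := rfl
  have hcolinear := lTensor_rTensor_comp_midMul_comp_map_comp_comul ρ ℓ (LinearMap.ext hright)
    (rTensor_comp_eq_of_leftColinear ρ ℓ Sinv hS2 lam hlam hleft)
  change _ ∈ LinearMap.range (((LinearMap.ker _).subtype.rTensor A).lTensor A)
  rw [← LinearMap.ker_lTensor_rTensor_eq_range_subtype_ker, LinearMap.mem_ker,
    LinearMap.rTensor_sub, LinearMap.lTensor_sub, LinearMap.sub_apply, sub_eq_zero, hf_eq, hincl]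
  exact LinearMap.congr_fun hcolinear h

/-- For a strong connection form `ℓ` on a right `H`-comodule algebra `A`
(with coinvariants `B`), the middle leg of `(id ⊗ μ_A ⊗ id)((ℓ ⊗ ℓ)(Δ_H h))`
is coinvariant: the element lies in `A ⊗ B ⊗ A`. -/
theorem stmt_3 (H A : Type*) [Ring H] [HopfAlgebra ℂ H] [Ring A] [Algebra ℂ A]
    (ρ : A →ₐ[ℂ] A ⊗[ℂ] H)
    (hcoassoc : ∀ a : A,
      TensorProduct.assoc ℂ A H H (TensorProduct.map ρ.toLinearMap LinearMap.id (ρ a)) =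
        TensorProduct.map LinearMap.id Coalgebra.comul (ρ a))
    (hcounit : ∀ a : A,
      TensorProduct.rid ℂ A (TensorProduct.map LinearMap.id Coalgebra.counit (ρ a)) = a)
    -- inverse of the antipode and the induced left coaction λ_A
    (Sinv : H →ₗ[ℂ] H)
    (hS1 : ∀ h : H, Sinv ((HopfAlgebra.antipode (R := ℂ) : H →ₗ[ℂ] H) h) = h)
    (hS2 : ∀ h : H, (HopfAlgebra.antipode (R := ℂ) : H →ₗ[ℂ] H) (Sinv h) = h)
    (lam : A →ₗ[ℂ] H ⊗[ℂ] A)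
    (hlam : ∀ a : A,
      lam a = TensorProduct.map Sinv LinearMap.id (TensorProduct.comm ℂ A H (ρ a)))
    -- the strong connection form ℓ
    (ℓ : H →ₗ[ℂ] A ⊗[ℂ] A)
    (hnorm : ℓ 1 = (1 : A) ⊗ₜ[ℂ] (1 : A))
    (hsplit : ∀ h : H, LinearMap.mul' ℂ A (ℓ h) = (Coalgebra.counit h : ℂ) • (1 : A))
    (hright : ∀ h : H,
      TensorProduct.map LinearMap.id ρ.toLinearMap (ℓ h) =
        TensorProduct.assoc ℂ A A H (TensorProduct.map ℓ LinearMap.id (Coalgebra.comul h)))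
    (hleft : ∀ h : H,
      TensorProduct.assoc ℂ H A A (TensorProduct.map lam LinearMap.id (ℓ h)) =
        TensorProduct.map LinearMap.id ℓ (Coalgebra.comul h))
    -- the map (id ⊗ μ_A ⊗ id) : (A ⊗ A) ⊗ (A ⊗ A) → A ⊗ (A ⊗ A)
    (f : (A ⊗[ℂ] A) ⊗[ℂ] (A ⊗[ℂ] A) →ₗ[ℂ] A ⊗[ℂ] (A ⊗[ℂ] A))
    (hf : ∀ a₁ a₂ a₃ a₄ : A,
      f ((a₁ ⊗ₜ[ℂ] a₂) ⊗ₜ[ℂ] (a₃ ⊗ₜ[ℂ] a₄)) = a₁ ⊗ₜ[ℂ] ((a₂ * a₃) ⊗ₜ[ℂ] a₄)) :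
    ∀ h : H,
      f (TensorProduct.map ℓ ℓ (Coalgebra.comul h)) ∈
        LinearMap.range (TensorProduct.map (LinearMap.id : A →ₗ[ℂ] A)
          (TensorProduct.map
            (LinearMap.ker (ρ.toLinearMap - (TensorProduct.mk ℂ A H).flip 1)).subtype
            (LinearMap.id : A →ₗ[ℂ] A))) :=
  stmt_3_general H A ρ Sinv hS2 lam hlam ℓ hright hleft f hf
end

section
/- Let O(U_q(2)) be as above and let v be the matrix with rows (u,0,0), (0, α, −qγ*u*), (0, γ, α*u*). Then the entries v_{ij} satisfy the quantum matrix relations: v_{ij}v_{ik} = q v_{ik}v_{ij} for j < k; v_{ji}v_{ki} = q v_{ki}v_{ji} for j < k; v_{ij}v_{km} = v_{km}v_{ij} for i < k, j > m; and v_{ij}v_{km} − v_{km}v_{ij} = (q − q⁻¹) v_{im}v_{kj} for i < k, j < m, where indices run over {1,2,3}. -/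
/-!
Only the lower right 2×2 block of `v` carries content: the entry `u` is central, and so is
`u*`, which multiplies the third column. Conjugating `αγ = qγα` and `αγ* = qγ*α` gives the
remaining q-commutations `γ*α* = qα*γ*` and `γα* = qα*γ`, and the two unitarity relations give
`αα* - α*α = (1 - q²)γγ*`, which is the diagonal relation because `-(q - q⁻¹)q = 1 - q²`.
-/

def QCommute {R A : Type*} [Mul A] [SMul R A] (c : R) (a b : A) : Prop :=
  a * b = c • (b * a)

namespace QCommute

protected theorem eq {R A : Type*} [Mul A] [SMul R A] {c : R} {a b : A} (h : QCommute c a b) :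
    a * b = c • (b * a) :=
  h

protected theorem star {R A : Type*} [Star R] [Mul A] [StarMul A] [SMul R A] [StarModule R A]
    {c : R} {a b : A} (h : QCommute c a b) : QCommute (star c) (star b) (star a) := by
  unfold QCommute at *
  rw [← star_mul, h, star_smul, star_mul]

variable {R A : Type*} [Semigroup A] [SMul R A] [IsScalarTower R A A] {c : R} {a b z : A}

theorem mul_right (h : QCommute c a b) (hz : Commute a z) : QCommute c a (b * z) := by
  unfold QCommute at *
  rw [← mul_assoc, h, smul_mul_assoc, mul_assoc, hz.eq, ← mul_assoc]

theorem mul_left (h : QCommute c a b) (hz : Commute b z) : QCommute c (a * z) b := by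
  unfold QCommute at *
  rw [mul_assoc, ← hz.eq, ← mul_assoc, h, smul_mul_assoc, mul_assoc]

end QCommute

theorem mul_sub_mul_eq_smul_of_unitarity {𝕜 A : Type*} [Field 𝕜] [Ring A] [Algebra 𝕜 A] {c : 𝕜}
    (hc : c ≠ 0) {a a' b b' z : A} (hbb' : Commute b b') (h₁ : a' * a + b * b' = 1)
    (h₂ : a * a' + c ^ 2 • (b * b') = 1) (ha : Commute a z) (hb : Commute b z) :
    a * (a' * z) - a' * z * a = (c - c⁻¹) • (-(c • (b' * z)) * b) := by
  have hcomm : a * a' - a' * a = (1 - c ^ 2) • (b * b') := by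
    linear_combination (norm := module) h₂ - h₁
  have hcoef : -((c - c⁻¹) * c) = 1 - c ^ 2 := by
    field_simp
    ring
  calc a * (a' * z) - a' * z * a = (a * a' - a' * a) * z := by
        rw [mul_assoc a', ← ha.eq, sub_mul, mul_assoc, mul_assoc]
    _ = (c - c⁻¹) • (-(c • (b' * z)) * b) := by
        rw [hcomm, neg_mul, smul_neg, smul_mul_assoc, smul_mul_assoc, smul_smul, ← neg_smul, hcoef,
          mul_assoc b', ← hb.eq, ← mul_assoc, ← hbb'.eq]

theorem stmt_6_general (A : Type*) [Ring A] [Algebra ℂ A] [StarRing A] [StarModule ℂ A]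
    (q : ℝ) (hq0 : 0 < q) (u α γ : A)
    (hcent : ∀ x : A, u * x = x * u)
    (h1 : α * γ = (q : ℂ) • (γ * α))
    (h2 : α * star γ = (q : ℂ) • (star γ * α))
    (h3 : γ * star γ = star γ * γ)
    (h4 : star α * α + γ * star γ = 1)
    (h5 : α * star α + ((q : ℂ) ^ 2) • (γ * star γ) = 1)
    (v : Matrix (Fin 3) (Fin 3) A)
    (hv : v = !![u, 0, 0;
                 0, α, -((q : ℂ) • (star γ * star u));
                 0, γ, star α * star u]) :
    (∀ i j k : Fin 3, j < k → v i j * v i k = (q : ℂ) • (v i k * v i j)) ∧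
    (∀ i j k : Fin 3, j < k → v j i * v k i = (q : ℂ) • (v k i * v j i)) ∧
    (∀ i j k m : Fin 3, i < k → m < j → v i j * v k m = v k m * v i j) ∧
    (∀ i j k m : Fin 3, i < k → j < m →
      v i j * v k m - v k m * v i j = ((q : ℂ) - (q : ℂ)⁻¹) • (v i m * v k j)) := by
  have hcent' : ∀ x : A, Commute x (star u) := fun x => by
    simpa using (Commute.star_star (hcent (star x))).symm
  have h1' : QCommute (q : ℂ) (star γ) (star α) := by simpa using QCommute.star h1
  have h2' : QCommute (q : ℂ) γ (star α) := by simpa using QCommute.star h2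
  have hrow₂ : QCommute (q : ℂ) α (star γ * star u) := QCommute.mul_right h2 (hcent' α)
  have hrow₃ : QCommute (q : ℂ) γ (star α * star u) := h2'.mul_right (hcent' γ)
  have hcol₃ : QCommute (q : ℂ) (star γ * star u) (star α * star u) :=
    (h1'.mul_right (hcent' _)).mul_left ((hcent' _).mul_left (Commute.refl _))
  have hanti : star γ * star u * γ = γ * (star γ * star u) :=
    (Commute.mul_left (Commute.symm h3) (hcent' γ).symm).eq
  have hdiag : α * (star α * star u) - star α * star u * α =
      ((q : ℂ) - (q : ℂ)⁻¹) • (-((q : ℂ) • (star γ * star u)) * γ) :=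
    mul_sub_mul_eq_smul_of_unitarity (by exact_mod_cast hq0.ne') h3 h4 h5 (hcent' α) (hcent' γ)
  subst hv
  -- `Complex.coe_smul` would turn the `ℂ`-scalars into real ones and hide the facts above.
  refine ⟨?_, ?_, ?_, ?_⟩
  · intro i j k hjk
    fin_cases i <;> fin_cases j <;> fin_cases k <;>
      simp [-Complex.coe_smul, hrow₂.eq, hrow₃.eq] at hjk ⊢
  · intro i j k hjk
    fin_cases i <;> fin_cases j <;> fin_cases k <;>
      simp [-Complex.coe_smul, h1, hcol₃.eq] at hjk ⊢
  · intro i j k m hik hmj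
    fin_cases i <;> fin_cases j <;> fin_cases k <;> fin_cases m <;>
      simp [-Complex.coe_smul, hanti] at hik hmj ⊢
  · intro i j k m hik hjm
    fin_cases i <;> fin_cases j <;> fin_cases k <;> fin_cases m <;>
      simp [-Complex.coe_smul, hcent, hdiag] at hik hjm ⊢

/-- The entries of the fundamental matrix `v` of `O(U_q(2))` satisfy the quantum matrix
(`q`-commutation) relations. -/
theorem stmt_6 (A : Type*) [Ring A] [Algebra ℂ A] [StarRing A] [StarModule ℂ A]
    (q : ℝ) (hq0 : 0 < q) (hq1 : q < 1) (u α γ : A)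
    (huu : u * star u = 1) (huu' : star u * u = 1)
    (hcent : ∀ x : A, u * x = x * u)
    (h1 : α * γ = (q : ℂ) • (γ * α))
    (h2 : α * star γ = (q : ℂ) • (star γ * α))
    (h3 : γ * star γ = star γ * γ)
    (h4 : star α * α + γ * star γ = 1)
    (h5 : α * star α + ((q : ℂ) ^ 2) • (γ * star γ) = 1)
    (v : Matrix (Fin 3) (Fin 3) A)
    (hv : v = !![u, 0, 0;
                 0, α, -((q : ℂ) • (star γ * star u));
                 0, γ, star α * star u]) :
    (∀ i j k : Fin 3, j < k → v i j * v i k = (q : ℂ) • (v i k * v i j)) ∧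
    (∀ i j k : Fin 3, j < k → v j i * v k i = (q : ℂ) • (v k i * v j i)) ∧
    (∀ i j k m : Fin 3, i < k → m < j → v i j * v k m = v k m * v i j) ∧
    (∀ i j k m : Fin 3, i < k → j < m →
      v i j * v k m - v k m * v i j = ((q : ℂ) - (q : ℂ)⁻¹) • (v i m * v k j)) :=
  stmt_6_general A q hq0 u α γ hcent h1 h2 h3 h4 h5 v hv
end

section
/- Let H be a Hopf algebra, A a right H-comodule algebra with coaction ϱ_A, B = A^{co H}, V a left H-comodule, and ℓ : H → A ⊗ A a strong connection form. Then the map σ : A □_H V → B ⊗ (A □_H V), σ(Σᵢ aⁱ ⊗ vⁱ) = Σᵢ aⁱ₍₀₎ ℓ(aⁱ₍₁₎)¹ ⊗ ℓ(aⁱ₍₁₎)² ⊗ vⁱ (where ℓ(h) = ℓ(h)¹ ⊗ ℓ(h)², summation implicit), is a well-defined left B-linear splitting of the multiplication map B ⊗ (A □_H V) → A □_H V; that is, multiplying the first two legs of σ(x) recovers x, for all x ∈ A □_H V. -/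
/-!
Write `φ(a) = a₀ ℓ(a₁)¹ ⊗ ℓ(a₁)²`, so that `σ` is `φ ⊗ id_V` up to reassociation. Multiplying the
two legs of `φ(a)` gives `a₀ ε(a₁) = a`, and `φ(ba) = b φ(a)` for coinvariant `b` because
`ϱ(ba) = (b ⊗ 1) ϱ(a)`.

The left leg of `φ(a)` is coinvariant: by the left colinearity of `ℓ`,
`ϱ(a₀ ℓ(a₁)¹) ⊗ ℓ(a₁)² = a₀ ℓ(a₃)¹ ⊗ a₁ S(a₂) ⊗ ℓ(a₃)²`, and `a₁ S(a₂) = ε(a₁) 1`. The right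
colinearity of `ℓ` makes `φ` right colinear, so `σ` carries the equalizer `A □_H V` into
`A ⊗ (A □_H V)`. Over a field, an element of `A ⊗ (A ⊗ V)` whose left leg lies in `B` and whose
right leg lies in `A □_H V` lies in `B ⊗ (A □_H V)`.
-/

open TensorProduct

theorem TensorProduct.mem_range_map_ker_subtype_of_flat {R M N P Q : Type*} [CommRing R]
    [AddCommGroup M] [Module R M] [AddCommGroup N] [Module R N] [AddCommGroup P] [Module R P]
    [AddCommGroup Q] [Module R Q] {f : M →ₗ[R] P} {g : N →ₗ[R] Q}
    [Module.Flat R N] [Module.Flat R Q] [Module.Flat R (LinearMap.ker f)] {z : M ⊗[R] N}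
    (hf : LinearMap.rTensor N f z = 0) (hg : LinearMap.lTensor M g z = 0) :
    z ∈ LinearMap.range (map (LinearMap.ker f).subtype (LinearMap.ker g).subtype) := by
  obtain ⟨y, rfl⟩ := (Module.Flat.rTensor_exact N f.exact_subtype_ker_map z).mp hf
  have hy : g.lTensor (LinearMap.ker f) y = 0 := by
    apply Module.Flat.rTensor_preserves_injective_linearMap (M := Q) _
      (LinearMap.ker f).injective_subtype
    rwa [map_zero, ← LinearMap.comp_apply, LinearMap.rTensor_comp_lTensor,
      ← LinearMap.lTensor_comp_rTensor]
  obtain ⟨w, rfl⟩ := (Module.Flat.lTensor_exact (LinearMap.ker f) g.exact_subtype_ker_map y).mp hy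
  exact ⟨w, by rw [← LinearMap.rTensor_comp_lTensor]; rfl⟩

section ConnectionMul

variable {R M A A' : Type*} [CommSemiring R] [AddCommMonoid M] [Module R M]
  [Semiring A] [Algebra R A] [Semiring A'] [Algebra R A']

theorem TensorProduct.map_mulLeft_id_apply (r : A) (t : A ⊗[R] A') :
    map (LinearMap.mulLeft R r) LinearMap.id t = (r ⊗ₜ 1) * t := by
  rw [← LinearMap.mulLeft_one (R := R) (A := A'), ← LinearMap.mulLeft_tmul,
    LinearMap.mulLeft_apply]

def connectionMul (ℓ : M →ₗ[R] A ⊗[R] A') : A ⊗[R] M →ₗ[R] A ⊗[R] A' :=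
  map (LinearMap.mul' R A) LinearMap.id ∘ₗ (TensorProduct.assoc R A A A').symm.toLinearMap ∘ₗ
    map LinearMap.id ℓ

@[simp]
theorem connectionMul_tmul (ℓ : M →ₗ[R] A ⊗[R] A') (c : A) (h : M) :
    connectionMul ℓ (c ⊗ₜ h) = (c ⊗ₜ 1) * ℓ h := by
  simp only [connectionMul, LinearMap.comp_apply, map_tmul, LinearMap.id_apply]
  induction ℓ h using TensorProduct.induction_on with
  | zero => simp
  | add x y hx hy => simp only [tmul_add, map_add, hx, hy, mul_add]
  | tmul p q => simp

theorem connectionMul_comp_map_mulLeft (ℓ : M →ₗ[R] A ⊗[R] A') (r : A) :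
    connectionMul ℓ ∘ₗ map (LinearMap.mulLeft R r) LinearMap.id =
      map (LinearMap.mulLeft R r) LinearMap.id ∘ₗ connectionMul ℓ :=
  TensorProduct.ext' fun c h ↦ by
    simp [map_mulLeft_id_apply, ← mul_assoc, Algebra.TensorProduct.tmul_mul_tmul]

theorem mul'_connectionMul [CoalgebraStruct R M] {ℓ : M →ₗ[R] A ⊗[R] A}
    (hsplit : ∀ h : M, LinearMap.mul' R A (ℓ h) = (Coalgebra.counit h : R) • (1 : A))
    (r : A ⊗[R] M) :
    LinearMap.mul' R A (connectionMul ℓ r) =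
      TensorProduct.rid R A (map LinearMap.id Coalgebra.counit r) := by
  induction r using TensorProduct.induction_on with
  | zero => simp
  | add x y hx hy => simp only [map_add, hx, hy]
  | tmul c h =>
    have hmul : ∀ t : A ⊗[R] A, LinearMap.mul' R A (map (LinearMap.mulLeft R c) LinearMap.id t) =
        c * LinearMap.mul' R A t := by
      intro t
      induction t using TensorProduct.induction_on with
      | zero => simp
      | add x y hx hy => simp only [map_add, hx, hy, mul_add]
      | tmul p q => simp [mul_assoc]
    rw [connectionMul_tmul, ← map_mulLeft_id_apply, hmul, hsplit]
    simp

end ConnectionMul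

section Bialgebra

variable {R H A : Type*} [CommSemiring R] [Semiring H] [Bialgebra R H] [Semiring A]
  [Algebra R A] (ρ : A →ₐ[R] A ⊗[R] H)

/-- The map `φ : a ↦ a₀ ℓ(a₁)¹ ⊗ ℓ(a₁)²`. -/
def connectionSplitting (ℓ : H →ₗ[R] A ⊗[R] A) : A →ₗ[R] A ⊗[R] A :=
  connectionMul ℓ ∘ₗ ρ.toLinearMap

variable {ℓ : H →ₗ[R] A ⊗[R] A}

theorem mul'_connectionSplitting
    (hcounit : ∀ a : A,
      TensorProduct.rid R A (TensorProduct.map LinearMap.id Coalgebra.counit (ρ a)) = a)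
    (hsplit : ∀ h : H, LinearMap.mul' R A (ℓ h) = (Coalgebra.counit h : R) • (1 : A)) (a : A) :
    LinearMap.mul' R A (connectionSplitting ρ ℓ a) = a := by
  rw [connectionSplitting, LinearMap.comp_apply, mul'_connectionMul hsplit,
    AlgHom.toLinearMap_apply, hcounit]

theorem connectionSplitting_mul_of_coaction_eq {b : A} (hb : ρ b = b ⊗ₜ 1) (a : A) :
    connectionSplitting ρ ℓ (b * a) =
      map (LinearMap.mulLeft R b) LinearMap.id (connectionSplitting ρ ℓ a) := by
  rw [connectionSplitting, LinearMap.comp_apply, LinearMap.comp_apply, AlgHom.toLinearMap_apply,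
    map_mul, hb, ← map_mulLeft_id_apply, ← LinearMap.comp_apply (connectionMul ℓ),
    connectionMul_comp_map_mulLeft, LinearMap.comp_apply, AlgHom.toLinearMap_apply]

theorem map_id_coaction_connectionMul
    (hright : ∀ h : H,
      TensorProduct.map LinearMap.id ρ.toLinearMap (ℓ h) =
        TensorProduct.assoc R A A H (TensorProduct.map ℓ LinearMap.id (Coalgebra.comul h)))
    (r : A ⊗[R] H) :
    map LinearMap.id ρ.toLinearMap (connectionMul ℓ r) =
      TensorProduct.assoc R A A H (map (connectionMul ℓ) LinearMap.id
        ((TensorProduct.assoc R A H H).symm (map LinearMap.id Coalgebra.comul r))) := by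
  induction r using TensorProduct.induction_on with
  | zero => simp
  | add x y hx hy => simp only [map_add, hx, hy]
  | tmul c h =>
    have hmul : ∀ t : A ⊗[R] A, map LinearMap.id ρ.toLinearMap ((c ⊗ₜ 1) * t) =
        map (LinearMap.mulLeft R c) LinearMap.id (map LinearMap.id ρ.toLinearMap t) := by
      intro t
      induction t using TensorProduct.induction_on with
      | zero => simp
      | add x y hx hy => simp only [mul_add, map_add, hx, hy]
      | tmul p q => simp
    have hassoc : ∀ u : H ⊗[R] H,
        map (LinearMap.mulLeft R c) LinearMap.id
          (TensorProduct.assoc R A A H (map ℓ LinearMap.id u)) =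
        TensorProduct.assoc R A A H (map (connectionMul ℓ) LinearMap.id
          ((TensorProduct.assoc R A H H).symm (c ⊗ₜ u))) := by
      intro u
      induction u using TensorProduct.induction_on with
      | zero => simp
      | add x y hx hy => simp only [tmul_add, map_add, hx, hy]
      | tmul h₁ h₂ =>
        simp only [map_tmul, LinearMap.id_apply, TensorProduct.assoc_symm_tmul,
          connectionMul_tmul, ← map_mulLeft_id_apply]
        induction ℓ h₁ using TensorProduct.induction_on with
        | zero => simp
        | add x y hx hy => simp only [add_tmul, map_add, hx, hy]
        | tmul p q => simp
    rw [connectionMul_tmul, hmul, hright, hassoc, map_tmul, LinearMap.id_apply]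

theorem map_id_coaction_connectionSplitting
    (hcoassoc : ∀ a : A,
      TensorProduct.assoc R A H H (TensorProduct.map ρ.toLinearMap LinearMap.id (ρ a)) =
        TensorProduct.map LinearMap.id Coalgebra.comul (ρ a))
    (hright : ∀ h : H,
      TensorProduct.map LinearMap.id ρ.toLinearMap (ℓ h) =
        TensorProduct.assoc R A A H (TensorProduct.map ℓ LinearMap.id (Coalgebra.comul h)))
    (a : A) :
    map LinearMap.id ρ.toLinearMap (connectionSplitting ρ ℓ a) =
      TensorProduct.assoc R A A H (map (connectionSplitting ρ ℓ) LinearMap.id (ρ a)) := by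
  rw [connectionSplitting, LinearMap.comp_apply, map_id_coaction_connectionMul ρ hright,
    AlgHom.toLinearMap_apply, ← hcoassoc, LinearEquiv.symm_apply_apply,
    ← LinearMap.comp_apply (map _ _), ← map_comp, LinearMap.id_comp]

end Bialgebra

section HopfAlgebra

variable {R H A : Type*} [CommSemiring R] [Semiring H] [HopfAlgebra R H] [Semiring A]
  [Algebra R A] (ρ : A →ₐ[R] A ⊗[R] H) {ℓ : H →ₗ[R] A ⊗[R] A}

def coactionMulAntipode : A ⊗[R] H →ₗ[R] A ⊗[R] H :=
  LinearMap.mul' R (A ⊗[R] H) ∘ₗ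
    map ρ.toLinearMap (Algebra.TensorProduct.includeRight.toLinearMap ∘ₗ HopfAlgebra.antipode R)

@[simp]
theorem coactionMulAntipode_tmul (c : A) (k : H) :
    coactionMulAntipode ρ (c ⊗ₜ k) = ρ c * (1 ⊗ₜ HopfAlgebra.antipode R k) := by
  simp [coactionMulAntipode]

/-- Sweedler form: `a₀ ⊗ a₁ S(a₂) = a ⊗ 1`. -/
theorem coactionMulAntipode_apply_coaction
    (hcoassoc : ∀ a : A,
      TensorProduct.assoc R A H H (TensorProduct.map ρ.toLinearMap LinearMap.id (ρ a)) =
        TensorProduct.map LinearMap.id Coalgebra.comul (ρ a))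
    (hcounit : ∀ a : A,
      TensorProduct.rid R A (TensorProduct.map LinearMap.id Coalgebra.counit (ρ a)) = a)
    (a : A) : coactionMulAntipode ρ (ρ a) = a ⊗ₜ 1 := by
  set μS : H ⊗[R] H →ₗ[R] H := LinearMap.mul' R H ∘ₗ (HopfAlgebra.antipode R).lTensor H
  have hT : ∀ r : A ⊗[R] H, coactionMulAntipode ρ r =
      map LinearMap.id μS (TensorProduct.assoc R A H H (map ρ.toLinearMap LinearMap.id r)) := by
    intro r
    induction r using TensorProduct.induction_on with
    | zero => simp
    | add x y hx hy => simp only [map_add, hx, hy]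
    | tmul c k =>
      simp only [coactionMulAntipode_tmul, map_tmul, LinearMap.id_apply, AlgHom.toLinearMap_apply]
      induction ρ c using TensorProduct.induction_on with
      | zero => simp
      | add x y hx hy => simp only [add_mul, map_add, add_tmul, hx, hy]
      | tmul c₀ c₁ => simp [μS]
  have hε : ∀ r : A ⊗[R] H, map LinearMap.id (μS ∘ₗ Coalgebra.comul) r =
      TensorProduct.rid R A (map LinearMap.id Coalgebra.counit r) ⊗ₜ 1 := by
    intro r
    induction r using TensorProduct.induction_on with
    | zero => simp
    | add x y hx hy => simp only [map_add, hx, hy, add_tmul]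
    | tmul c k => simp [μS, Algebra.algebraMap_eq_smul_one, smul_tmul]
  rw [hT, hcoassoc, ← LinearMap.comp_apply (map _ _), ← map_comp, LinearMap.id_comp, hε, hcounit]

/-- Sweedler form: `ℓ(h)¹₀ ⊗ ℓ(h)¹₁ ⊗ ℓ(h)² = ℓ(h₂)¹ ⊗ S(h₁) ⊗ ℓ(h₂)²`, obtained by applying `S`
to the `H`-leg of `hleft`. -/
theorem map_coaction_id_connection (Sinv : H →ₗ[R] H)
    (hS : ∀ h : H, HopfAlgebra.antipode R (Sinv h) = h) (lam : A →ₗ[R] H ⊗[R] A)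
    (hlam : ∀ a : A,
      lam a = TensorProduct.map Sinv LinearMap.id (TensorProduct.comm R A H (ρ a)))
    (hleft : ∀ h : H,
      TensorProduct.assoc R H A A (TensorProduct.map lam LinearMap.id (ℓ h)) =
        TensorProduct.map LinearMap.id ℓ (Coalgebra.comul h)) (h : H) :
    map ρ.toLinearMap LinearMap.id (ℓ h) =
      connectionMul (map ((TensorProduct.mk R A H).flip 1) LinearMap.id ∘ₗ ℓ)
        (map (Algebra.TensorProduct.includeRight.toLinearMap ∘ₗ HopfAlgebra.antipode R)
          LinearMap.id (Coalgebra.comul h)) := by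
  set Φ : H ⊗[R] (A ⊗[R] A) →ₗ[R] (A ⊗[R] H) ⊗[R] A :=
    LinearMap.mul' R _ ∘ₗ map ((Algebra.TensorProduct.includeLeft.toLinearMap ∘ₗ
      Algebra.TensorProduct.includeRight.toLinearMap) ∘ₗ HopfAlgebra.antipode R)
      (map ((TensorProduct.mk R A H).flip 1) LinearMap.id)
  have hΦlam : ∀ t : A ⊗[R] A,
      Φ (TensorProduct.assoc R H A A (map lam LinearMap.id t)) =
        map ρ.toLinearMap LinearMap.id t := by
    intro t
    induction t using TensorProduct.induction_on with
    | zero => simp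
    | add x y hx hy => simp only [map_add, hx, hy]
    | tmul p q =>
      simp only [map_tmul, LinearMap.id_apply, hlam, AlgHom.toLinearMap_apply]
      induction ρ p using TensorProduct.induction_on with
      | zero => simp
      | add x y hx hy => simp only [map_add, add_tmul, hx, hy]
      | tmul c₀ c₁ => simp [Φ, hS]
  have hΦℓ : ∀ u : H ⊗[R] H, Φ (map LinearMap.id ℓ u) =
      connectionMul (map ((TensorProduct.mk R A H).flip 1) LinearMap.id ∘ₗ ℓ)
        (map (Algebra.TensorProduct.includeRight.toLinearMap ∘ₗ HopfAlgebra.antipode R)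
          LinearMap.id u) := by
    intro u
    induction u using TensorProduct.induction_on with
    | zero => simp
    | add x y hx hy => simp only [map_add, hx, hy]
    | tmul k h' => simp [Φ]
  rw [← hΦlam, hleft, hΦℓ]

/-- Sweedler form: `ϱ(c ℓ(h)¹) ⊗ ℓ(h)² = c₀ ℓ(h₂)¹ ⊗ c₁ S(h₁) ⊗ ℓ(h₂)²`. -/
theorem map_coaction_id_connectionMul (hleft : ∀ h : H, map ρ.toLinearMap LinearMap.id (ℓ h) =
      connectionMul (map ((TensorProduct.mk R A H).flip 1) LinearMap.id ∘ₗ ℓ)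
        (map (Algebra.TensorProduct.includeRight.toLinearMap ∘ₗ HopfAlgebra.antipode R)
          LinearMap.id (Coalgebra.comul h))) (r : A ⊗[R] H) :
    map ρ.toLinearMap LinearMap.id (connectionMul ℓ r) =
      connectionMul (map ((TensorProduct.mk R A H).flip 1) LinearMap.id ∘ₗ ℓ)
        (map (coactionMulAntipode ρ) LinearMap.id
          ((TensorProduct.assoc R A H H).symm (map LinearMap.id Coalgebra.comul r))) := by
  induction r using TensorProduct.induction_on with
  | zero => simp
  | add x y hx hy => simp only [map_add, hx, hy]
  | tmul c h =>
    have hmul : ∀ t : A ⊗[R] A, map ρ.toLinearMap LinearMap.id ((c ⊗ₜ 1) * t) =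
        map (LinearMap.mulLeft R (ρ c)) LinearMap.id (map ρ.toLinearMap LinearMap.id t) := by
      intro t
      induction t using TensorProduct.induction_on with
      | zero => simp
      | add x y hx hy => simp only [mul_add, map_add, hx, hy]
      | tmul p q => simp
    have hS' : ∀ u : H ⊗[R] H, map (LinearMap.mulLeft R (ρ c)) LinearMap.id
        (map (Algebra.TensorProduct.includeRight.toLinearMap ∘ₗ HopfAlgebra.antipode R)
          LinearMap.id u) =
        map (coactionMulAntipode ρ) LinearMap.id ((TensorProduct.assoc R A H H).symm (c ⊗ₜ u)) := by
      intro u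
      induction u using TensorProduct.induction_on with
      | zero => simp
      | add x y hx hy => simp only [tmul_add, map_add, hx, hy]
      | tmul k h' => simp
    rw [connectionMul_tmul, hmul, hleft,
      ← LinearMap.comp_apply (map _ _), ← connectionMul_comp_map_mulLeft, LinearMap.comp_apply,
      hS', map_tmul, LinearMap.id_apply]

theorem map_coaction_id_connectionSplitting
    (hcoassoc : ∀ a : A,
      TensorProduct.assoc R A H H (TensorProduct.map ρ.toLinearMap LinearMap.id (ρ a)) =
        TensorProduct.map LinearMap.id Coalgebra.comul (ρ a))
    (hcounit : ∀ a : A,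
      TensorProduct.rid R A (TensorProduct.map LinearMap.id Coalgebra.counit (ρ a)) = a)
    (hleft : ∀ h : H, map ρ.toLinearMap LinearMap.id (ℓ h) =
      connectionMul (map ((TensorProduct.mk R A H).flip 1) LinearMap.id ∘ₗ ℓ)
        (map (Algebra.TensorProduct.includeRight.toLinearMap ∘ₗ HopfAlgebra.antipode R)
          LinearMap.id (Coalgebra.comul h))) (a : A) :
    map ρ.toLinearMap LinearMap.id (connectionSplitting ρ ℓ a) =
      map ((TensorProduct.mk R A H).flip 1) LinearMap.id (connectionSplitting ρ ℓ a) := by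
  have hT : coactionMulAntipode ρ ∘ₗ ρ.toLinearMap = (TensorProduct.mk R A H).flip 1 :=
    LinearMap.ext (coactionMulAntipode_apply_coaction ρ hcoassoc hcounit)
  have hU : ∀ r : A ⊗[R] H,
      connectionMul (map ((TensorProduct.mk R A H).flip 1) LinearMap.id ∘ₗ ℓ)
        (map ((TensorProduct.mk R A H).flip 1) LinearMap.id r) =
      map ((TensorProduct.mk R A H).flip 1) LinearMap.id (connectionMul ℓ r) := by
    intro r
    induction r using TensorProduct.induction_on with
    | zero => simp
    | add x y hx hy => simp only [map_add, hx, hy]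
    | tmul c h =>
      simp only [map_tmul, connectionMul_tmul, LinearMap.comp_apply]
      induction ℓ h using TensorProduct.induction_on with
      | zero => simp
      | add x y hx hy => simp only [mul_add, map_add, hx, hy]
      | tmul p q => simp
  rw [connectionSplitting, LinearMap.comp_apply,
    map_coaction_id_connectionMul ρ hleft, AlgHom.toLinearMap_apply, ← hcoassoc,
    LinearEquiv.symm_apply_apply, ← LinearMap.comp_apply (map _ _), ← map_comp, hT,
    LinearMap.id_comp, hU]

end HopfAlgebra

section Cotensor

variable {R H A V : Type*} [CommSemiring R] [AddCommMonoid H] [Module R H] [AddCommMonoid A]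
  [Module R A] [AddCommMonoid V] [Module R V]

theorem map_id_coaction_assoc_map_of_colinear {ρ : A →ₗ[R] A ⊗[R] H} {φ : A →ₗ[R] A ⊗[R] A}
    (hφ : ∀ a, map LinearMap.id ρ (φ a) = TensorProduct.assoc R A A H (map φ LinearMap.id (ρ a)))
    (y : A ⊗[R] V) :
    map LinearMap.id (TensorProduct.assoc R A H V ∘ₗ map ρ LinearMap.id)
        (TensorProduct.assoc R A A V (map φ LinearMap.id y)) =
      TensorProduct.assoc R A A (H ⊗[R] V)
        (map φ LinearMap.id (TensorProduct.assoc R A H V (map ρ LinearMap.id y))) := by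
  induction y using TensorProduct.induction_on with
  | zero => simp
  | add x y hx hy => simp only [map_add, hx, hy]
  | tmul a v =>
    have hv : ∀ t : A ⊗[R] A,
        map LinearMap.id (TensorProduct.assoc R A H V ∘ₗ map ρ LinearMap.id)
          (TensorProduct.assoc R A A V (t ⊗ₜ v)) =
        map LinearMap.id (TensorProduct.assoc R A H V).toLinearMap
          (TensorProduct.assoc R A (A ⊗[R] H) V (map LinearMap.id ρ t ⊗ₜ v)) := by
      intro t
      induction t using TensorProduct.induction_on with
      | zero => simp
      | add x y hx hy => simp only [add_tmul, map_add, hx, hy]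
      | tmul p q => simp
    simp only [map_tmul, LinearMap.id_apply, hv, hφ]
    induction ρ a using TensorProduct.induction_on with
    | zero => simp
    | add x y hx hy => simp only [add_tmul, map_add, hx, hy]
    | tmul c h =>
      simp only [map_tmul, LinearMap.id_apply, TensorProduct.assoc_tmul]
      induction φ c using TensorProduct.induction_on with
      | zero => simp
      | add x y hx hy => simp only [add_tmul, map_add, hx, hy]
      | tmul p q => simp

theorem map_assoc_map {M M' N : Type*} [AddCommMonoid M] [Module R M] [AddCommMonoid M']
    [Module R M'] [AddCommMonoid N] [Module R N] (f : M →ₗ[R] M') (ψ : A →ₗ[R] M ⊗[R] N)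
    (y : A ⊗[R] V) :
    map f LinearMap.id (TensorProduct.assoc R M N V (map ψ LinearMap.id y)) =
      TensorProduct.assoc R M' N V (map (map f LinearMap.id ∘ₗ ψ) LinearMap.id y) := by
  simpa [map_map] using map_map_assoc f LinearMap.id LinearMap.id (map ψ LinearMap.id y)

theorem map_id_map_id_assoc_map (φ : A →ₗ[R] A ⊗[R] A) (lamV : V →ₗ[R] H ⊗[R] V) (y : A ⊗[R] V) :
    map LinearMap.id (map LinearMap.id lamV) (TensorProduct.assoc R A A V (map φ LinearMap.id y)) =
      TensorProduct.assoc R A A (H ⊗[R] V) (map φ LinearMap.id (map LinearMap.id lamV y)) := by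
  simp [map_map_assoc, map_map]

end Cotensor

theorem assoc_map_mem_range_map_ker_subtype {K H A V M : Type*} [Field K] [AddCommGroup H]
    [Module K H] [AddCommGroup A] [Module K A] [AddCommGroup V] [Module K V] [AddCommGroup M]
    [Module K M] {ρ : A →ₗ[K] A ⊗[K] H} {lamV : V →ₗ[K] H ⊗[K] V} {g : A →ₗ[K] M}
    {φ : A →ₗ[K] A ⊗[K] A} (hg : map g LinearMap.id ∘ₗ φ = 0)
    (hφ : ∀ a, map LinearMap.id ρ (φ a) = TensorProduct.assoc K A A H (map φ LinearMap.id (ρ a)))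
    {x : A ⊗[K] V}
    (hx : x ∈ LinearMap.ker
      ((TensorProduct.assoc K A H V).toLinearMap ∘ₗ map ρ LinearMap.id - map LinearMap.id lamV)) :
    TensorProduct.assoc K A A V (map φ LinearMap.id x) ∈ LinearMap.range (map
      (LinearMap.ker g).subtype (LinearMap.ker
        ((TensorProduct.assoc K A H V).toLinearMap ∘ₗ map ρ LinearMap.id -
          map LinearMap.id lamV)).subtype) := by
  refine TensorProduct.mem_range_map_ker_subtype_of_flat ?_ ?_
  · rw [LinearMap.rTensor_def, map_assoc_map, hg, map_zero_left, LinearMap.zero_apply, map_zero]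
  · rw [LinearMap.mem_ker, LinearMap.sub_apply, LinearMap.comp_apply, LinearEquiv.coe_toLinearMap,
      sub_eq_zero] at hx
    rw [LinearMap.lTensor_sub, LinearMap.sub_apply, LinearMap.lTensor_def, LinearMap.lTensor_def,
      map_id_coaction_assoc_map_of_colinear hφ, map_id_map_id_assoc_map, hx, sub_self]

theorem stmt_13_general (H A V : Type*) [Ring H] [HopfAlgebra ℂ H] [Ring A] [Algebra ℂ A]
    [AddCommGroup V] [Module ℂ V]
    (ρ : A →ₐ[ℂ] A ⊗[ℂ] H)
    (hcoassoc : ∀ a : A,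
      TensorProduct.assoc ℂ A H H (TensorProduct.map ρ.toLinearMap LinearMap.id (ρ a)) =
        TensorProduct.map LinearMap.id Coalgebra.comul (ρ a))
    (hcounit : ∀ a : A,
      TensorProduct.rid ℂ A (TensorProduct.map LinearMap.id Coalgebra.counit (ρ a)) = a)
    -- inverse of the antipode and induced left coaction on A
    (Sinv : H →ₗ[ℂ] H)
    (hS2 : ∀ h : H, (HopfAlgebra.antipode (R := ℂ) : H →ₗ[ℂ] H) (Sinv h) = h)
    (lam : A →ₗ[ℂ] H ⊗[ℂ] A)
    (hlam : ∀ a : A,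
      lam a = TensorProduct.map Sinv LinearMap.id (TensorProduct.comm ℂ A H (ρ a)))
    -- the strong connection form
    (ℓ : H →ₗ[ℂ] A ⊗[ℂ] A)
    (hsplit : ∀ h : H, LinearMap.mul' ℂ A (ℓ h) = (Coalgebra.counit h : ℂ) • (1 : A))
    (hright : ∀ h : H,
      TensorProduct.map LinearMap.id ρ.toLinearMap (ℓ h) =
        TensorProduct.assoc ℂ A A H (TensorProduct.map ℓ LinearMap.id (Coalgebra.comul h)))
    (hleft : ∀ h : H,
      TensorProduct.assoc ℂ H A A (TensorProduct.map lam LinearMap.id (ℓ h)) =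
        TensorProduct.map LinearMap.id ℓ (Coalgebra.comul h))
    -- the left H-comodule V
    (lamV : V →ₗ[ℂ] H ⊗[ℂ] V)
    -- the coinvariant subalgebra B and the cotensor product C = A □_H V
    (B : Submodule ℂ A)
    (hB : B = LinearMap.ker (ρ.toLinearMap - (TensorProduct.mk ℂ A H).flip 1))
    (C : Submodule ℂ (A ⊗[ℂ] V))
    (hC : C = LinearMap.ker
      ((TensorProduct.assoc ℂ A H V).toLinearMap ∘ₗ
          TensorProduct.map ρ.toLinearMap LinearMap.id -
        TensorProduct.map LinearMap.id lamV))
    -- the map σ : x ↦ Σ x⁰₍₀₎ ℓ(x⁰₍₁₎)¹ ⊗ ℓ(x⁰₍₁₎)² ⊗ x¹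
    (σ : A ⊗[ℂ] V →ₗ[ℂ] A ⊗[ℂ] (A ⊗[ℂ] V))
    (hσ : σ = (TensorProduct.assoc ℂ A A V).toLinearMap ∘ₗ
      TensorProduct.map
        ((TensorProduct.map (LinearMap.mul' ℂ A) LinearMap.id) ∘ₗ
          (TensorProduct.assoc ℂ A A A).symm.toLinearMap ∘ₗ
          TensorProduct.map LinearMap.id ℓ)
        LinearMap.id ∘ₗ
      TensorProduct.map ρ.toLinearMap LinearMap.id)
    -- the multiplication B ⊗ (A □_H V) → A □_H V, computed in A ⊗ (A ⊗ V)
    (Ψ : A ⊗[ℂ] (A ⊗[ℂ] V) →ₗ[ℂ] A ⊗[ℂ] V)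
    (hΨ : Ψ = TensorProduct.map (LinearMap.mul' ℂ A) LinearMap.id ∘ₗ
      (TensorProduct.assoc ℂ A A V).symm.toLinearMap) :
    ∀ x ∈ C,
      (σ x ∈ LinearMap.range (TensorProduct.map B.subtype C.subtype)) ∧
      Ψ (σ x) = x ∧
      (∀ b ∈ B,
        σ (TensorProduct.map (LinearMap.mulLeft ℂ b) LinearMap.id x) =
          TensorProduct.map (LinearMap.mulLeft ℂ b) LinearMap.id (σ x)) := by
  intro x hx
  set φ := connectionSplitting ρ ℓ
  have hσφ : ∀ y, σ y = TensorProduct.assoc ℂ A A V (map φ LinearMap.id y) := fun y ↦ by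
    rw [hσ, LinearMap.comp_apply, LinearMap.comp_apply, map_map, LinearMap.id_comp]; rfl
  refine ⟨?_, ?_, fun b hb ↦ ?_⟩
  · have hcoinv : map (ρ.toLinearMap - (TensorProduct.mk ℂ A H).flip 1) LinearMap.id ∘ₗ φ = 0 :=
      LinearMap.ext fun a ↦ by
        rw [LinearMap.comp_apply, ← LinearMap.rTensor_def, LinearMap.rTensor_sub,
          LinearMap.sub_apply, LinearMap.zero_apply, sub_eq_zero]
        exact map_coaction_id_connectionSplitting ρ hcoassoc hcounit
          (map_coaction_id_connection ρ Sinv hS2 lam hlam hleft) a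
    subst hB hC
    rw [hσφ]
    exact assoc_map_mem_range_map_ker_subtype hcoinv
      (map_id_coaction_connectionSplitting ρ hcoassoc hright) hx
  · have hmul : LinearMap.mul' ℂ A ∘ₗ φ = LinearMap.id :=
      LinearMap.ext (mul'_connectionSplitting ρ hcounit hsplit)
    rw [hΨ, hσφ, LinearMap.comp_apply, LinearEquiv.coe_toLinearMap, LinearEquiv.symm_apply_apply,
      map_map, hmul, LinearMap.id_comp, map_id, LinearMap.id_apply]
  · have hbρ : ρ b = b ⊗ₜ 1 := by
      subst hB
      simpa [sub_eq_zero] using hb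
    have hφb : φ ∘ₗ LinearMap.mulLeft ℂ b = map (LinearMap.mulLeft ℂ b) LinearMap.id ∘ₗ φ :=
      LinearMap.ext (connectionSplitting_mul_of_coaction_eq ρ hbρ)
    rw [hσφ, hσφ, map_assoc_map, map_map, hφb, LinearMap.id_comp]

/-- A strong connection form `ℓ` on a principal `H`-comodule algebra `A` induces, for any left
`H`-comodule `V`, a left `B`-linear splitting `σ` of the multiplication map
`B ⊗ (A □_H V) → A □_H V`, where `B = A^{co H}`:
`σ` takes values in `B ⊗ (A □_H V)`, multiplying its first two legs recovers the identity,
and `σ` commutes with left multiplication by coinvariants. -/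
theorem stmt_13 (H A V : Type*) [Ring H] [HopfAlgebra ℂ H] [Ring A] [Algebra ℂ A]
    [AddCommGroup V] [Module ℂ V]
    (ρ : A →ₐ[ℂ] A ⊗[ℂ] H)
    (hcoassoc : ∀ a : A,
      TensorProduct.assoc ℂ A H H (TensorProduct.map ρ.toLinearMap LinearMap.id (ρ a)) =
        TensorProduct.map LinearMap.id Coalgebra.comul (ρ a))
    (hcounit : ∀ a : A,
      TensorProduct.rid ℂ A (TensorProduct.map LinearMap.id Coalgebra.counit (ρ a)) = a)
    -- inverse of the antipode and induced left coaction on A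
    (Sinv : H →ₗ[ℂ] H)
    (hS1 : ∀ h : H, Sinv ((HopfAlgebra.antipode (R := ℂ) : H →ₗ[ℂ] H) h) = h)
    (hS2 : ∀ h : H, (HopfAlgebra.antipode (R := ℂ) : H →ₗ[ℂ] H) (Sinv h) = h)
    (lam : A →ₗ[ℂ] H ⊗[ℂ] A)
    (hlam : ∀ a : A,
      lam a = TensorProduct.map Sinv LinearMap.id (TensorProduct.comm ℂ A H (ρ a)))
    -- the strong connection form
    (ℓ : H →ₗ[ℂ] A ⊗[ℂ] A)
    (hnorm : ℓ 1 = (1 : A) ⊗ₜ[ℂ] (1 : A))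
    (hsplit : ∀ h : H, LinearMap.mul' ℂ A (ℓ h) = (Coalgebra.counit h : ℂ) • (1 : A))
    (hright : ∀ h : H,
      TensorProduct.map LinearMap.id ρ.toLinearMap (ℓ h) =
        TensorProduct.assoc ℂ A A H (TensorProduct.map ℓ LinearMap.id (Coalgebra.comul h)))
    (hleft : ∀ h : H,
      TensorProduct.assoc ℂ H A A (TensorProduct.map lam LinearMap.id (ℓ h)) =
        TensorProduct.map LinearMap.id ℓ (Coalgebra.comul h))
    -- the left H-comodule V
    (lamV : V →ₗ[ℂ] H ⊗[ℂ] V)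
    (hVcoassoc : ∀ v : V,
      TensorProduct.assoc ℂ H H V (TensorProduct.map Coalgebra.comul LinearMap.id (lamV v)) =
        TensorProduct.map LinearMap.id lamV (lamV v))
    (hVcounit : ∀ v : V,
      TensorProduct.lid ℂ V (TensorProduct.map Coalgebra.counit LinearMap.id (lamV v)) = v)
    -- the coinvariant subalgebra B and the cotensor product C = A □_H V
    (B : Submodule ℂ A)
    (hB : B = LinearMap.ker (ρ.toLinearMap - (TensorProduct.mk ℂ A H).flip 1))
    (C : Submodule ℂ (A ⊗[ℂ] V))
    (hC : C = LinearMap.ker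
      ((TensorProduct.assoc ℂ A H V).toLinearMap ∘ₗ
          TensorProduct.map ρ.toLinearMap LinearMap.id -
        TensorProduct.map LinearMap.id lamV))
    -- the map σ : x ↦ Σ x⁰₍₀₎ ℓ(x⁰₍₁₎)¹ ⊗ ℓ(x⁰₍₁₎)² ⊗ x¹
    (σ : A ⊗[ℂ] V →ₗ[ℂ] A ⊗[ℂ] (A ⊗[ℂ] V))
    (hσ : σ = (TensorProduct.assoc ℂ A A V).toLinearMap ∘ₗ
      TensorProduct.map
        ((TensorProduct.map (LinearMap.mul' ℂ A) LinearMap.id) ∘ₗ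
          (TensorProduct.assoc ℂ A A A).symm.toLinearMap ∘ₗ
          TensorProduct.map LinearMap.id ℓ)
        LinearMap.id ∘ₗ
      TensorProduct.map ρ.toLinearMap LinearMap.id)
    -- the multiplication B ⊗ (A □_H V) → A □_H V, computed in A ⊗ (A ⊗ V)
    (Ψ : A ⊗[ℂ] (A ⊗[ℂ] V) →ₗ[ℂ] A ⊗[ℂ] V)
    (hΨ : Ψ = TensorProduct.map (LinearMap.mul' ℂ A) LinearMap.id ∘ₗ
      (TensorProduct.assoc ℂ A A V).symm.toLinearMap) :
    ∀ x ∈ C,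
      (σ x ∈ LinearMap.range (TensorProduct.map B.subtype C.subtype)) ∧
      Ψ (σ x) = x ∧
      (∀ b ∈ B,
        σ (TensorProduct.map (LinearMap.mulLeft ℂ b) LinearMap.id x) =
          TensorProduct.map (LinearMap.mulLeft ℂ b) LinearMap.id (σ x)) :=
  stmt_13_general H A V ρ hcoassoc hcounit Sinv hS2 lam hlam ℓ hsplit hright hleft lamV B hB C hC σ
    hσ Ψ hΨ
end

section
/- Let B be an algebra, Ω¹B = ker(μ : B ⊗ B → B) the bimodule of universal one-forms, and d : B → Ω¹B, d(b) = 1⊗b − b⊗1, the universal derivative. Let M be a left B-module and σ : M → B ⊗ M a left B-linear splitting of the action map B ⊗ M → M. Then ∇ : M → B ⊗ M defined by ∇(x) = 1 ⊗ x − σ(x) takes values in Ω¹B ⊗_B M ⊆ B ⊗ M and satisfies the Leibniz rule ∇(b·x) = d(b)·x + b·∇(x) for all b ∈ B and x ∈ M, where d(b)·x denotes (1⊗bx − b⊗x) ∈ B ⊗ M. -/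
open TensorProduct

/-!
For `t : B ⊗ M`, applying the universal derivative `d` to the first factor of `t` and then
letting the second factor of `Ω¹B ⊆ B ⊗ B` act on `M` returns `1 ⊗ act t - t`. Taking
`t = σ x`, where `act (σ x) = x`, exhibits `∇ x = 1 ⊗ x - σ x` in the image of `Ω¹B ⊗ M`.
The Leibniz rule is immediate from the left `B`-linearity of `σ`.
-/

section UniversalForms

variable (R : Type*) {B M : Type*} [CommRing R] [Ring B] [Algebra R B]
  [AddCommGroup M] [Module R M]

def universalDerivative : B →ₗ[R] LinearMap.ker (LinearMap.mul' R B) :=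
  LinearMap.codRestrict _ (TensorProduct.mk R B B 1 - (TensorProduct.mk R B B).flip 1)
    fun b => by simp [LinearMap.mul'_apply]

theorem coe_universalDerivative (b : B) :
    (universalDerivative R b : B ⊗[R] B) = 1 ⊗ₜ b - b ⊗ₜ 1 :=
  rfl

def formsTensorToTensor (act : B ⊗[R] M →ₗ[R] M) :
    LinearMap.ker (LinearMap.mul' R B) ⊗[R] M →ₗ[R] B ⊗[R] M :=
  TensorProduct.map LinearMap.id act ∘ₗ (TensorProduct.assoc R B B M).toLinearMap ∘ₗ
    TensorProduct.map (LinearMap.ker (LinearMap.mul' R B)).subtype LinearMap.id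

variable {R}

theorem formsTensorToTensor_map_universalDerivative {act : B ⊗[R] M →ₗ[R] M}
    (hunit : ∀ m : M, act (1 ⊗ₜ m) = m) (t : B ⊗[R] M) :
    formsTensorToTensor R act (TensorProduct.map (universalDerivative R) LinearMap.id t) =
      1 ⊗ₜ act t - t := by
  induction t using TensorProduct.induction_on with
  | zero => simp
  | tmul b m =>
    simp [formsTensorToTensor, coe_universalDerivative, TensorProduct.sub_tmul, hunit]
  | add x y hx hy =>
    rw [map_add, map_add, hx, hy, map_add, TensorProduct.tmul_add]
    abel

theorem one_tmul_sub_mem_range_formsTensorToTensor {act : B ⊗[R] M →ₗ[R] M}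
    (hunit : ∀ m : M, act (1 ⊗ₜ m) = m) {σ : M →ₗ[R] B ⊗[R] M}
    (hsplit : ∀ m : M, act (σ m) = m) (m : M) :
    1 ⊗ₜ m - σ m ∈ LinearMap.range (formsTensorToTensor R act) :=
  ⟨TensorProduct.map (universalDerivative R) LinearMap.id (σ m), by
    rw [formsTensorToTensor_map_universalDerivative hunit, hsplit]⟩

end UniversalForms

theorem stmt_16_general (B M : Type*) [Ring B] [Algebra ℂ B]
    [AddCommGroup M] [Module ℂ M] [Module B M]
    (act : B ⊗[ℂ] M →ₗ[ℂ] M)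
    (hact : ∀ (b : B) (m : M), act (b ⊗ₜ[ℂ] m) = b • m)
    (σ : M →ₗ[ℂ] B ⊗[ℂ] M)
    (hsplit : ∀ m : M, act (σ m) = m)
    (hBlin : ∀ (b : B) (m : M),
      σ (b • m) = TensorProduct.map (LinearMap.mulLeft ℂ b) LinearMap.id (σ m))
    (grad : M →ₗ[ℂ] B ⊗[ℂ] M)
    (hgrad : ∀ m : M, grad m = (1 : B) ⊗ₜ[ℂ] m - σ m) :
    (∀ m : M, grad m ∈ LinearMap.range
      ((TensorProduct.map (LinearMap.id : B →ₗ[ℂ] B) act) ∘ₗ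
        (TensorProduct.assoc ℂ B B M).toLinearMap ∘ₗ
        TensorProduct.map (LinearMap.ker (LinearMap.mul' ℂ B)).subtype
          (LinearMap.id : M →ₗ[ℂ] M))) ∧
    (∀ (b : B) (m : M),
      grad (b • m) = ((1 : B) ⊗ₜ[ℂ] (b • m) - b ⊗ₜ[ℂ] m) +
        TensorProduct.map (LinearMap.mulLeft ℂ b) LinearMap.id (grad m)) := by
  have hunit : ∀ m : M, act (1 ⊗ₜ m) = m := fun m => by rw [hact, one_smul]
  refine ⟨fun m => hgrad m ▸ one_tmul_sub_mem_range_formsTensorToTensor hunit hsplit m,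
    fun b m => ?_⟩
  rw [hgrad, hgrad, hBlin, map_sub, TensorProduct.map_tmul, LinearMap.mulLeft_apply, mul_one,
    LinearMap.id_apply]
  abel

/-- Given a left `B`-linear splitting `σ : M → B ⊗ M` of the action map, the map
`∇(x) = 1 ⊗ x − σ(x)` takes values in (the canonical image in `B ⊗ M` of)
`Ω¹B ⊗_B M` (where `Ω¹B = ker μ ⊆ B ⊗ B`, with `(b ⊗ b') ⊗ m ↦ b ⊗ b'·m`) and
satisfies the Leibniz rule `∇(b·x) = d(b)·x + b·∇(x)`. -/
theorem stmt_16 (B M : Type*) [Ring B] [Algebra ℂ B]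
    [AddCommGroup M] [Module ℂ M] [Module B M] [IsScalarTower ℂ B M]
    (act : B ⊗[ℂ] M →ₗ[ℂ] M)
    (hact : ∀ (b : B) (m : M), act (b ⊗ₜ[ℂ] m) = b • m)
    (σ : M →ₗ[ℂ] B ⊗[ℂ] M)
    (hsplit : ∀ m : M, act (σ m) = m)
    (hBlin : ∀ (b : B) (m : M),
      σ (b • m) = TensorProduct.map (LinearMap.mulLeft ℂ b) LinearMap.id (σ m))
    (grad : M →ₗ[ℂ] B ⊗[ℂ] M)
    (hgrad : ∀ m : M, grad m = (1 : B) ⊗ₜ[ℂ] m - σ m) :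
    (∀ m : M, grad m ∈ LinearMap.range
      ((TensorProduct.map (LinearMap.id : B →ₗ[ℂ] B) act) ∘ₗ
        (TensorProduct.assoc ℂ B B M).toLinearMap ∘ₗ
        TensorProduct.map (LinearMap.ker (LinearMap.mul' ℂ B)).subtype
          (LinearMap.id : M →ₗ[ℂ] M))) ∧
    (∀ (b : B) (m : M),
      grad (b • m) = ((1 : B) ⊗ₜ[ℂ] (b • m) - b ⊗ₜ[ℂ] m) +
        TensorProduct.map (LinearMap.mulLeft ℂ b) LinearMap.id (grad m)) :=
  stmt_16_general B M act hact σ hsplit hBlin grad hgrad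
end
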